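/- arXiv:1206.2385 — 2 statements merged into one kernel-verified Lean document; each statement's English description precedes it below -/
import Mathlib

section
/- If U, U', V, V' are real-valued random vectors with V, V' taking values in ℝ^l, U, U' real-valued, and λ ∈ ℝ^l, then |1{U < V·λ} - 1{U' < V'·λ}| ≤ 1{|U - V·λ| ≤ |U - U'|} + 1{|U' - V'·λ| ≤ |λ||V - V'|} pointwise, where |·| denotes the Euclidean norm. -/
/-!
Write `b = ⟪V, λ⟫` and `b' = ⟪V', λ⟫`. If both indicators on the right vanish, then `U` is closer
to `U'` than to `b`, and by Cauchy–Schwarz `b` is closer to `b'` than `U'` is; this forces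
`U < b ↔ U' < b'`, so the left-hand side vanishes as well. Otherwise the right-hand side is at
least `1`, which bounds the left-hand side.
-/

theorem lt_iff_lt_of_abs_sub_lt_abs_sub {α : Type*} [CommRing α] [LinearOrder α]
    [IsStrictOrderedRing α] {a a' b b' : α}
    (ha : |a - a'| < |a - b|) (hb : |b - b'| < |a' - b'|) : a < b ↔ a' < b' := by
  constructor <;> intro h <;> by_contra! h'
  · rw [abs_of_neg (sub_neg.2 h)] at ha
    rw [abs_of_nonneg (sub_nonneg.2 h')] at hb
    linarith [neg_abs_le (a - a'), le_abs_self (b - b')]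
  · rw [abs_of_nonneg (sub_nonneg.2 h')] at ha
    rw [abs_of_neg (sub_neg.2 h)] at hb
    linarith [le_abs_self (a - a'), neg_abs_le (b - b')]

theorem abs_ite_sub_ite_le_ite_add_ite {α : Type*} [Ring α] [LinearOrder α] [IsOrderedRing α]
    {p q r s : Prop} [Decidable p] [Decidable q] [Decidable r] [Decidable s]
    (h : ¬r → ¬s → (p ↔ q)) :
    |(if p then (1 : α) else 0) - (if q then 1 else 0)|
      ≤ (if r then 1 else 0) + (if s then 1 else 0) := by
  by_cases hrs : r ∨ s
  · have hle : |(if p then (1 : α) else 0) - (if q then 1 else 0)| ≤ 1 := by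
      split_ifs <;> norm_num
    have hge : (1 : α) ≤ (if r then 1 else 0) + (if s then 1 else 0) := by
      rcases hrs with hr | hs <;> split_ifs <;> norm_num
    exact hle.trans hge
  · obtain ⟨hr, hs⟩ := not_or.1 hrs
    simp [hr, hs, h hr hs]

theorem indicator_inner_pointwise_bound
    {Ω : Type*} {l : ℕ}
    (U U' : Ω → ℝ) (V V' : Ω → EuclideanSpace ℝ (Fin l))
    (lam : EuclideanSpace ℝ (Fin l)) (ω : Ω) :
    |(if U ω < (inner ℝ (V ω) lam : ℝ) then (1:ℝ) else 0)
      - (if U' ω < (inner ℝ (V' ω) lam : ℝ) then (1:ℝ) else 0)|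
    ≤ (if |U ω - (inner ℝ (V ω) lam : ℝ)| ≤ |U ω - U' ω| then (1:ℝ) else 0)
      + (if |U' ω - (inner ℝ (V' ω) lam : ℝ)| ≤ ‖lam‖ * ‖V ω - V' ω‖ then (1:ℝ) else 0) := by
  have hcs : |inner ℝ (V ω) lam - inner ℝ (V' ω) lam| ≤ ‖lam‖ * ‖V ω - V' ω‖ := by
    rw [← inner_sub_left, mul_comm]
    exact abs_real_inner_le_norm _ _
  refine abs_ite_sub_ite_le_ite_add_ite fun hU hU' => ?_
  exact lt_iff_lt_of_abs_sub_lt_abs_sub (not_le.1 hU) (hcs.trans_lt (not_le.1 hU'))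
end

section
/- Let X be a real random variable whose distribution function F is Lipschitz on an interval containing the compact set Θ. Then for any δ > 0, the class 𝓕 = {f_θ : θ ∈ Θ} with f_θ(x,y) = (α - 1{x < θ})(α - 1{y < θ}) has bracketing number N(δ, 𝓕) = O(δ^{-2}) as δ → 0, with respect to ρ(f) = ‖f(X₀,X₁)‖₂ where X₀, X₁ each have distribution F. -/
/-!
Cut `[c, d]` into cells of length `ε`. If `θ` and `t` lie in the same cell `(a, β]`, the
indicators `1{x < θ}` and `1{x < t}` can differ only for `x ∈ (a, β)`, so `|f θ - f t|` is
bounded by `1{x ∈ (a, β)} + 1{y ∈ (a, β)}`, whose squared `L²` norm is `O(F β - F a) = O(L ε)`.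
With `ε ≍ δ²` and one representative of `Θ` per cell this gives `O(δ⁻²)` brackets.
-/

open MeasureTheory Set

noncomputable def quantilogramKernel (α θ x y : ℝ) : ℝ :=
  (α - if x < θ then 1 else 0) * (α - if y < θ then 1 else 0)

lemma lt_iff_lt_of_mem_Ioc_of_notMem_Ioo {a β θ t z : ℝ} (hθ : θ ∈ Ioc a β) (ht : t ∈ Ioc a β)
    (hz : z ∉ Ioo a β) : z < θ ↔ z < t := by
  rcases le_or_gt z a with hza | haz
  · exact iff_of_true (hza.trans_lt hθ.1) (hza.trans_lt ht.1)
  · have hβz : β ≤ z := not_lt.1 fun hzβ => hz ⟨haz, hzβ⟩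
    exact iff_of_false (not_lt.2 (hθ.2.trans hβz)) (not_lt.2 (ht.2.trans hβz))

lemma abs_mul_sub_mul_le {p q r s : ℝ} (hq : |q| ≤ 1) (hr : |r| ≤ 1) :
    |p * q - r * s| ≤ |p - r| + |q - s| :=
  calc |p * q - r * s| = |(p - r) * q + r * (q - s)| := by ring_nf
    _ ≤ |p - r| * |q| + |r| * |q - s| := by
        rw [← abs_mul, ← abs_mul]; exact abs_add_le _ _
    _ ≤ |p - r| * 1 + 1 * |q - s| := by gcongr
    _ = |p - r| + |q - s| := by ring

lemma abs_sub_ite_le_one {α : ℝ} (hα₀ : 0 ≤ α) (hα₁ : α ≤ 1) (p : Prop) [Decidable p] :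
    |α - if p then 1 else 0| ≤ 1 := by
  rw [abs_le]; split_ifs <;> constructor <;> linarith

lemma abs_ite_lt_sub_ite_lt_le_indicator {θ t : ℝ} {s : Set ℝ} (h : ∀ z ∉ s, (z < θ ↔ z < t))
    (x : ℝ) : |(if x < t then (1 : ℝ) else 0) - if x < θ then 1 else 0| ≤ s.indicator 1 x := by
  by_cases hx : x ∈ s
  · rw [indicator_of_mem hx]; split_ifs <;> norm_num
  · simp [indicator_of_notMem hx, h x hx]

lemma abs_quantilogramKernel_sub_le {α θ t : ℝ} (hα₀ : 0 ≤ α) (hα₁ : α ≤ 1) {s : Set ℝ}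
    (h : ∀ z ∉ s, (z < θ ↔ z < t)) (x y : ℝ) :
    |quantilogramKernel α θ x y - quantilogramKernel α t x y| ≤
      s.indicator 1 x + s.indicator 1 y := by
  unfold quantilogramKernel
  refine (abs_mul_sub_mul_le (abs_sub_ite_le_one hα₀ hα₁ _)
    (abs_sub_ite_le_one hα₀ hα₁ _)).trans ?_
  rw [sub_sub_sub_cancel_left, sub_sub_sub_cancel_left]
  exact add_le_add (abs_ite_lt_sub_ite_lt_le_indicator h x)
    (abs_ite_lt_sub_ite_lt_le_indicator h y)

/-- The weight `2` makes the square of the bracket determine both indicators, so its integral is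
a junk value unless both events are null-measurable: the `Xᵢ` are not assumed measurable. -/
noncomputable def bracket (s : Set ℝ) (x y : ℝ) : ℝ := s.indicator 1 x + 2 * s.indicator 1 y

noncomputable section Grid
variable (c d ε : ℝ)

def cellIndex (θ : ℝ) : ℕ := ⌈(θ - c) / ε⌉₊

/-- Cell `j ≥ 1` is `(c + (j - 1) ε, c + j ε]` clipped at `d`; the truncated `j - 1` makes cell `0`
the point `c`, whose bracket interval is empty (`F` may jump at `c`). -/
def cellLeft (j : ℕ) : ℝ := min d (c + (j - 1 : ℕ) * ε)

def cellRight (j : ℕ) : ℝ := min d (c + j * ε)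

variable {c d ε}

lemma cellIndex_le (hε : 0 < ε) {θ : ℝ} (hθ : θ ≤ d) : cellIndex c ε θ ≤ ⌈(d - c) / ε⌉₊ :=
  Nat.ceil_mono (div_le_div_of_nonneg_right (by linarith) hε.le)

lemma cellIndex_eq_zero_iff (hε : 0 < ε) {θ : ℝ} : cellIndex c ε θ = 0 ↔ θ ≤ c := by
  rw [cellIndex, Nat.ceil_eq_zero, div_le_iff₀ hε, zero_mul, sub_nonpos]

lemma le_cellLeft (hcd : c ≤ d) (hε : 0 ≤ ε) (j : ℕ) : c ≤ cellLeft c d ε j :=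
  le_min hcd (le_add_of_nonneg_right (by positivity))

lemma cellLeft_le_cellRight (hε : 0 ≤ ε) (j : ℕ) : cellLeft c d ε j ≤ cellRight c d ε j :=
  min_le_min_left d (by gcongr; exact_mod_cast Nat.sub_le j 1)

lemma cellRight_le (j : ℕ) : cellRight c d ε j ≤ d := min_le_left _ _

lemma cellRight_sub_cellLeft_le (hε : 0 ≤ ε) (j : ℕ) :
    cellRight c d ε j - cellLeft c d ε j ≤ ε := by
  have hj : (j : ℝ) ≤ (j - 1 : ℕ) + 1 := by exact_mod_cast (by omega : j ≤ j - 1 + 1)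
  rcases min_cases d (c + (j - 1 : ℕ) * ε) with ⟨h, -⟩ | ⟨h, -⟩ <;>
    rw [cellRight, cellLeft, h] <;>
    nlinarith [min_le_left d (c + j * ε), min_le_right d (c + j * ε)]

lemma mem_Ioc_cellLeft_cellRight (hε : 0 < ε) {θ : ℝ} (hθ : θ ∈ Ioc c d) :
    θ ∈ Ioc (cellLeft c d ε (cellIndex c ε θ)) (cellRight c d ε (cellIndex c ε θ)) := by
  have hpos : 0 < (θ - c) / ε := div_pos (sub_pos.2 hθ.1) hε
  have hj : 1 ≤ cellIndex c ε θ := Nat.one_le_iff_ne_zero.2 (Nat.ceil_pos.2 hpos).ne'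
  have hlt : (cellIndex c ε θ : ℝ) - 1 < (θ - c) / ε := by
    linarith [Nat.ceil_lt_add_one hpos.le, show (cellIndex c ε θ : ℝ) = ⌈(θ - c) / ε⌉₊ from rfl]
  have hle : (θ - c) / ε ≤ cellIndex c ε θ := Nat.le_ceil _
  rw [lt_div_iff₀ hε] at hlt
  rw [div_le_iff₀ hε] at hle
  refine ⟨(min_le_right _ _).trans_lt ?_, le_min hθ.2 (by linarith)⟩
  rw [Nat.cast_sub hj, Nat.cast_one]
  linarith

lemma lt_iff_lt_of_cellIndex_eq (hε : 0 < ε) {θ t z : ℝ} (hθ : θ ∈ Icc c d) (ht : t ∈ Icc c d)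
    (h : cellIndex c ε θ = cellIndex c ε t)
    (hz : z ∉ Ioo (cellLeft c d ε (cellIndex c ε θ)) (cellRight c d ε (cellIndex c ε θ))) :
    z < θ ↔ z < t := by
  rcases hθ.1.eq_or_lt with hcθ | hcθ
  · have htc : t ≤ c := (cellIndex_eq_zero_iff hε).1 (h ▸ (cellIndex_eq_zero_iff hε).2 hcθ.ge)
    rw [← hcθ, le_antisymm htc ht.1]
  · have hct : c < t := lt_of_not_ge fun htc =>
      (cellIndex_eq_zero_iff hε).not.1 (h ▸ (cellIndex_eq_zero_iff hε).not.2 hcθ.not_ge) htc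
    rw [h] at hz
    exact lt_iff_lt_of_mem_Ioc_of_notMem_Ioo (h ▸ mem_Ioc_cellLeft_cellRight hε ⟨hcθ, hθ.2⟩)
      (mem_Ioc_cellLeft_cellRight hε ⟨hct, ht.2⟩) hz

end Grid

lemma abs_quantilogramKernel_sub_le_bracket {α c d ε θ t : ℝ} (hα₀ : 0 ≤ α) (hα₁ : α ≤ 1)
    (hε : 0 < ε) (hθ : θ ∈ Icc c d) (ht : t ∈ Icc c d) (h : cellIndex c ε t = cellIndex c ε θ)
    (x y : ℝ) :
    |quantilogramKernel α θ x y - quantilogramKernel α t x y| ≤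
      bracket (Ioo (cellLeft c d ε (cellIndex c ε θ)) (cellRight c d ε (cellIndex c ε θ))) x y := by
  refine (abs_quantilogramKernel_sub_le hα₀ hα₁
    (fun z hz => lt_iff_lt_of_cellIndex_eq hε hθ ht h.symm hz) x y).trans ?_
  unfold bracket
  linarith [indicator_nonneg (fun _ _ => zero_le_one) y (f := (1 : ℝ → ℝ))
    (s := Ioo (cellLeft c d ε (cellIndex c ε θ)) (cellRight c d ε (cellIndex c ε θ)))]

section Measure
variable {Ω : Type*} [MeasurableSpace Ω] {P : Measure Ω}

lemma measureReal_preimage_Ioo_le [IsFiniteMeasure P] {X : Ω → ℝ} {a β : ℝ} (hab : a ≤ β)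
    (h : NullMeasurableSet (X ⁻¹' Ioo a β) P) :
    P.real (X ⁻¹' Ioo a β) ≤ P.real {ω | X ω ≤ β} - P.real {ω | X ω ≤ a} := by
  have hdisj : Disjoint (X ⁻¹' Ioo a β) {ω | X ω ≤ a} :=
    disjoint_left.2 fun ω hω hω' => (not_lt.2 hω') hω.1
  have hsub : X ⁻¹' Ioo a β ∪ {ω | X ω ≤ a} ⊆ {ω | X ω ≤ β} := by
    rintro ω (hω | hω)
    exacts [hω.2.le, le_trans hω hab]
  have := measureReal_mono (μ := P) hsub
  rw [measureReal_union₀' h hdisj.aedisjoint] at this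
  linarith

lemma integral_sq_indicator_add_two_mul_indicator_le [IsFiniteMeasure P] (A B : Set Ω) :
    ∫ ω, (A.indicator 1 ω + 2 * B.indicator 1 ω) ^ 2 ∂P ≤ 2 * P.real A + 8 * P.real B := by
  set A' := toMeasurable P A
  set B' := toMeasurable P B
  have hA' : MeasurableSet A' := measurableSet_toMeasurable P A
  have hB' : MeasurableSet B' := measurableSet_toMeasurable P B
  have hint : Integrable (fun ω => 2 * A'.indicator 1 ω + 8 * B'.indicator (1 : Ω → ℝ) ω) P :=
    ((integrable_const 1).indicator hA').const_mul 2 |>.add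
      (((integrable_const 1).indicator hB').const_mul 8)
  calc ∫ ω, (A.indicator 1 ω + 2 * B.indicator 1 ω) ^ 2 ∂P
      ≤ ∫ ω, (2 * A'.indicator 1 ω + 8 * B'.indicator 1 ω) ∂P := by
        refine integral_mono_of_nonneg (.of_forall fun ω => sq_nonneg _) hint
          (.of_forall fun ω => ?_)
        have hA := indicator_le_indicator_of_subset (f := (1 : Ω → ℝ))
          (subset_toMeasurable P A) (fun _ => zero_le_one) ω
        have hB := indicator_le_indicator_of_subset (f := (1 : Ω → ℝ))
          (subset_toMeasurable P B) (fun _ => zero_le_one) ω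
        rcases indicator_eq_zero_or_self A (1 : Ω → ℝ) ω with hp | hp <;>
          rcases indicator_eq_zero_or_self B (1 : Ω → ℝ) ω with hq | hq <;>
          simp only [hp, hq, Pi.one_apply] at hA hB ⊢ <;>
          linarith [indicator_nonneg (fun _ _ => zero_le_one) ω (s := A') (f := (1 : Ω → ℝ)),
            indicator_nonneg (fun _ _ => zero_le_one) ω (s := B') (f := (1 : Ω → ℝ))]
    _ = 2 * P.real A + 8 * P.real B := by
        rw [integral_add (((integrable_const 1).indicator hA').const_mul 2)
          (((integrable_const 1).indicator hB').const_mul 8), integral_const_mul,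
          integral_const_mul, integral_indicator_one hA', integral_indicator_one hB',
          measureReal_def, measureReal_def, measure_toMeasurable, measure_toMeasurable]
        rfl

lemma nullMeasurableSet_of_aestronglyMeasurable_sq_indicator {A B : Set Ω}
    (h : AEStronglyMeasurable (fun ω => (A.indicator 1 ω + 2 * B.indicator (1 : Ω → ℝ) ω) ^ 2) P) :
    NullMeasurableSet A P ∧ NullMeasurableSet B P := by
  have hA : A = (fun ω => (A.indicator 1 ω + 2 * B.indicator (1 : Ω → ℝ) ω) ^ 2) ⁻¹' {1, 9} := by
    ext ω; rw [mem_preimage]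
    by_cases hωA : ω ∈ A <;> by_cases hωB : ω ∈ B <;> simp [hωA, hωB]
    all_goals norm_num
  have hB : B = (fun ω => (A.indicator 1 ω + 2 * B.indicator (1 : Ω → ℝ) ω) ^ 2) ⁻¹' {4, 9} := by
    ext ω; rw [mem_preimage]
    by_cases hωA : ω ∈ A <;> by_cases hωB : ω ∈ B <;> simp [hωA, hωB]
    all_goals norm_num
  constructor
  · rw [hA]
    exact h.aemeasurable.nullMeasurableSet_preimage ((measurableSet_singleton 9).insert _)
  · rw [hB]
    exact h.aemeasurable.nullMeasurableSet_preimage ((measurableSet_singleton 9).insert _)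

lemma integral_sq_bracket_Ioo_le [IsFiniteMeasure P] {X₀ X₁ : Ω → ℝ} {F : ℝ → ℝ}
    (hF₀ : ∀ θ, F θ = P.real {ω | X₀ ω ≤ θ}) (hF₁ : ∀ θ, F θ = P.real {ω | X₁ ω ≤ θ})
    {a β : ℝ} (hab : a ≤ β) :
    ∫ ω, bracket (Ioo a β) (X₀ ω) (X₁ ω) ^ 2 ∂P ≤ 10 * (F β - F a) := by
  change ∫ ω, ((X₀ ⁻¹' Ioo a β).indicator 1 ω + 2 * (X₁ ⁻¹' Ioo a β).indicator 1 ω) ^ 2 ∂P ≤ _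
  set A := X₀ ⁻¹' Ioo a β
  set B := X₁ ⁻¹' Ioo a β
  by_cases hm : AEStronglyMeasurable
      (fun ω => (A.indicator 1 ω + 2 * B.indicator (1 : Ω → ℝ) ω) ^ 2) P
  · obtain ⟨hA, hB⟩ := nullMeasurableSet_of_aestronglyMeasurable_sq_indicator hm
    linarith [integral_sq_indicator_add_two_mul_indicator_le (P := P) A B,
      measureReal_preimage_Ioo_le hab hA, measureReal_preimage_Ioo_le hab hB,
      hF₀ a, hF₀ β, hF₁ a, hF₁ β]
  · have hFa : F a ≤ F β := by
      rw [hF₀, hF₀]; exact measureReal_mono fun ω hω => le_trans hω hab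
    rw [integral_non_aestronglyMeasurable hm]
    linarith

end Measure

lemma sub_le_mul_of_abs_sub_le_mul_abs {F : ℝ → ℝ} {L c d a β ε : ℝ}
    (hLip : ∀ x ∈ Icc c d, ∀ y ∈ Icc c d, |F x - F y| ≤ L * |x - y|) (hL : 0 ≤ L)
    (hca : c ≤ a) (hab : a ≤ β) (hβd : β ≤ d) (hε : β - a ≤ ε) : F β - F a ≤ L * ε :=
  calc F β - F a ≤ L * |β - a| :=
        (le_abs_self _).trans (hLip β ⟨hca.trans hab, hβd⟩ a ⟨hca, hab.trans hβd⟩)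
    _ ≤ L * ε := by
        rw [abs_of_nonneg (sub_nonneg.2 hab)]
        exact mul_le_mul_of_nonneg_left hε hL

lemma natCeil_div_add_one_le {r K δ : ℝ} (hr : 0 ≤ r) (hK : 0 < K) (hδ : 0 < δ) (hδ₁ : δ ≤ 1) :
    ((⌈r / (δ ^ 2 / K)⌉₊ + 1 : ℕ) : ℝ) ≤ (r * K + 2) * δ ^ (-(2 : ℝ)) := by
  have hceil := Nat.ceil_lt_add_one (div_nonneg hr (by positivity : 0 ≤ δ ^ 2 / K))
  have htwo : 2 ≤ 2 / δ ^ 2 := by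
    rw [le_div_iff₀ (by positivity)]; nlinarith
  rw [Real.rpow_neg hδ.le, Real.rpow_two, div_div_eq_mul_div] at *
  push_cast
  calc _ ≤ r * K / δ ^ 2 + 2 := by linarith
    _ ≤ r * K / δ ^ 2 + 2 / δ ^ 2 := by linarith
    _ = _ := by ring

theorem quantilogram_bracketing_number_general
    {Ω : Type*} [MeasureSpace Ω] (P : Measure Ω) [IsProbabilityMeasure P]
    (X₀ X₁ : Ω → ℝ) (F : ℝ → ℝ) (Θ : Set ℝ) (hΘne : Θ.Nonempty)
    (α L c d : ℝ) (hα : 0 < α) (hα1 : α < 1) (hL : 0 ≤ L)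
    (hF0 : ∀ θ, F θ = (P {ω | X₀ ω ≤ θ}).toReal)
    (hF1 : ∀ θ, F θ = (P {ω | X₁ ω ≤ θ}).toReal)
    (hsub : Θ ⊆ Set.Icc c d)
    (hLip : ∀ x ∈ Set.Icc c d, ∀ y ∈ Set.Icc c d, |F x - F y| ≤ L * |x - y|)
    (f : ℝ → ℝ → ℝ → ℝ)
    (hf : ∀ θ x y, f θ x y =
      (α - (if x < θ then (1:ℝ) else 0)) * (α - (if y < θ then (1:ℝ) else 0))) :
    ∃ C > 0, ∃ δ₀ > 0, ∀ δ : ℝ, 0 < δ → δ ≤ δ₀ →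
      ∃ N : ℕ, (N : ℝ) ≤ C * δ ^ (-(2:ℝ)) ∧
        ∃ (ts : Fin N → ℝ) (bs : Fin N → ℝ → ℝ → ℝ),
          (∀ k, ts k ∈ Θ) ∧
          (∀ k, (∫ ω, (bs k (X₀ ω) (X₁ ω)) ^ 2 ∂P) ^ ((1:ℝ)/2) ≤ δ) ∧
          (∀ θ ∈ Θ, ∃ k, ∀ x y : ℝ, |f θ x y - f (ts k) x y| ≤ bs k x y) := by
  obtain ⟨θ₀, hθ₀⟩ := hΘne
  have hcd : c ≤ d := (hsub hθ₀).1.trans (hsub hθ₀).2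
  have hK : 0 < 10 * L + 1 := by linarith
  refine ⟨(d - c) * (10 * L + 1) + 2, by nlinarith, 1, one_pos, fun δ hδ hδ₁ => ?_⟩
  set ε := δ ^ 2 / (10 * L + 1) with hε_def
  have hε : 0 < ε := by positivity
  have hεδ : 10 * (L * ε) ≤ δ ^ 2 := by
    rw [hε_def, ← mul_assoc, mul_div_assoc', div_le_iff₀ hK]; nlinarith
  have : Nonempty Θ := ⟨⟨θ₀, hθ₀⟩⟩
  set center : ℕ → Θ := Function.invFun (Θ.domRestrict (cellIndex c ε))
  refine ⟨⌈(d - c) / ε⌉₊ + 1, natCeil_div_add_one_le (by linarith) hK hδ hδ₁,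
    fun k => center k, fun k => bracket (Ioo (cellLeft c d ε k) (cellRight c d ε k)),
    fun k => (center k).2, fun k => ?_, fun θ hθ => ?_⟩
  · have hab := cellLeft_le_cellRight (c := c) (d := d) hε.le k
    have hFk := sub_le_mul_of_abs_sub_le_mul_abs hLip hL (le_cellLeft hcd hε.le k) hab
      (cellRight_le k) (cellRight_sub_cellLeft_le hε.le k)
    rw [← Real.sqrt_eq_rpow, Real.sqrt_le_left hδ.le]
    linarith [integral_sq_bracket_Ioo_le hF0 hF1 hab]
  · have hcenter : cellIndex c ε (center (cellIndex c ε θ)) = cellIndex c ε θ :=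
      Function.invFun_eq (f := Θ.domRestrict (cellIndex c ε)) ⟨⟨θ, hθ⟩, rfl⟩
    refine ⟨⟨cellIndex c ε θ, Nat.lt_succ_of_le (cellIndex_le hε (hsub hθ).2)⟩, fun x y => ?_⟩
    rw [hf, hf]
    exact abs_quantilogramKernel_sub_le_bracket hα.le hα1.le hε (hsub hθ) (hsub (center _).2)
      hcenter x y

theorem quantilogram_bracketing_number
    {Ω : Type*} [MeasureSpace Ω] (P : Measure Ω) [IsProbabilityMeasure P]
    (X₀ X₁ : Ω → ℝ) (F : ℝ → ℝ) (Θ : Set ℝ) (hΘ : IsCompact Θ) (hΘne : Θ.Nonempty)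
    (α L c d : ℝ) (hα : 0 < α) (hα1 : α < 1) (hL : 0 ≤ L)
    (hF0 : ∀ θ, F θ = (P {ω | X₀ ω ≤ θ}).toReal)
    (hF1 : ∀ θ, F θ = (P {ω | X₁ ω ≤ θ}).toReal)
    (hsub : Θ ⊆ Set.Icc c d)
    (hLip : ∀ x ∈ Set.Icc c d, ∀ y ∈ Set.Icc c d, |F x - F y| ≤ L * |x - y|)
    (f : ℝ → ℝ → ℝ → ℝ)
    (hf : ∀ θ x y, f θ x y =
      (α - (if x < θ then (1:ℝ) else 0)) * (α - (if y < θ then (1:ℝ) else 0))) :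
    ∃ C > 0, ∃ δ₀ > 0, ∀ δ : ℝ, 0 < δ → δ ≤ δ₀ →
      ∃ N : ℕ, (N : ℝ) ≤ C * δ ^ (-(2:ℝ)) ∧
        ∃ (ts : Fin N → ℝ) (bs : Fin N → ℝ → ℝ → ℝ),
          (∀ k, ts k ∈ Θ) ∧
          (∀ k, (∫ ω, (bs k (X₀ ω) (X₁ ω)) ^ 2 ∂P) ^ ((1:ℝ)/2) ≤ δ) ∧
          (∀ θ ∈ Θ, ∃ k, ∀ x y : ℝ, |f θ x y - f (ts k) x y| ≤ bs k x y) :=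
  quantilogram_bracketing_number_general P X₀ X₁ F Θ hΘne α L c d hα hα1 hL hF0 hF1 hsub hLip f hf
end
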